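/- Let u : ℝ × ℝ → ℝ be a smooth solution of the KdV equation u_t + u·u_x + u_xxx = 0. Suppose P : ℝ × ℝ → ℝ is smooth and satisfies the symmetry determining equation ∂_t P + ∂_x(u·P) + ∂_x³ P = 0 identically, and Q : ℝ × ℝ → ℝ is smooth and satisfies the adjoint-symmetry determining equation ∂_t Q + u·∂_x Q + ∂_x³ Q = 0 identically. Then the local conservation law ∂_t(P·Q) + ∂_x(u·P·Q + Q·∂_x² P + P·∂_x² Q − ∂_x P·∂_x Q) = 0 holds identically. -/

import Mathlib

/-- partial derivative in the first (time) variable -/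
noncomputable def pt (u : ℝ × ℝ → ℝ) : ℝ × ℝ → ℝ :=
  fun p => deriv (fun s => u (s, p.2)) p.1

/-- partial derivative in the second (space) variable -/
noncomputable def px (u : ℝ × ℝ → ℝ) : ℝ × ℝ → ℝ :=
  fun p => deriv (fun y => u (p.1, y)) p.2

lemma hasDerivAt_slice_x (f : ℝ × ℝ → ℝ) (hf : ContDiff ℝ (⊤ : ℕ∞) f) (p : ℝ × ℝ) :
    HasDerivAt (fun y => f (p.1, y)) (fderiv ℝ f p (0, 1)) p.2 := by
  have h1 : HasDerivAt (fun y : ℝ => ((p.1 : ℝ), y)) ((0 : ℝ), (1 : ℝ)) p.2 :=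
    (hasDerivAt_const p.2 p.1).prodMk (hasDerivAt_id p.2)
  have h2 := (hf.differentiable (by simp) (p.1, p.2)).hasFDerivAt
  exact h2.comp_hasDerivAt p.2 h1

lemma hasDerivAt_slice_t (f : ℝ × ℝ → ℝ) (hf : ContDiff ℝ (⊤ : ℕ∞) f) (p : ℝ × ℝ) :
    HasDerivAt (fun s => f (s, p.2)) (fderiv ℝ f p (1, 0)) p.1 := by
  have h1 : HasDerivAt (fun s : ℝ => (s, (p.2 : ℝ))) ((1 : ℝ), (0 : ℝ)) p.1 :=
    (hasDerivAt_id p.1).prodMk (hasDerivAt_const p.1 p.2)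
  have h2 := (hf.differentiable (by simp) (p.1, p.2)).hasFDerivAt
  exact h2.comp_hasDerivAt p.1 h1

lemma px_eq_fderiv (f : ℝ × ℝ → ℝ) (hf : ContDiff ℝ (⊤ : ℕ∞) f) (p : ℝ × ℝ) :
    px f p = fderiv ℝ f p (0, 1) :=
  (hasDerivAt_slice_x f hf p).deriv

lemma cpx {f : ℝ × ℝ → ℝ} (hf : ContDiff ℝ (⊤ : ℕ∞) f) : ContDiff ℝ (⊤ : ℕ∞) (px f) := by
  have : px f = fun p => fderiv ℝ f p (0, 1) := funext (px_eq_fderiv f hf)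
  rw [this]
  exact (hf.fderiv_right (m := (⊤ : ℕ∞)) le_rfl).clm_apply contDiff_const

lemma px_mul {f g : ℝ × ℝ → ℝ} (hf : ContDiff ℝ (⊤ : ℕ∞) f) (hg : ContDiff ℝ (⊤ : ℕ∞) g) (p : ℝ × ℝ) :
    px (fun q => f q * g q) p = px f p * g p + f p * px g p := by
  have h := (hasDerivAt_slice_x f hf p).mul (hasDerivAt_slice_x g hg p)
  rw [px, (HasDerivAt.deriv (f := fun y => f (p.1, y) * g (p.1, y)) h), px_eq_fderiv f hf p, px_eq_fderiv g hg p]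

lemma pt_mul {f g : ℝ × ℝ → ℝ} (hf : ContDiff ℝ (⊤ : ℕ∞) f) (hg : ContDiff ℝ (⊤ : ℕ∞) g) (p : ℝ × ℝ) :
    pt (fun q => f q * g q) p = pt f p * g p + f p * pt g p := by
  have h := (hasDerivAt_slice_t f hf p).mul (hasDerivAt_slice_t g hg p)
  rw [pt, (HasDerivAt.deriv (f := fun s => f (s, p.2) * g (s, p.2)) h)]
  rw [show pt f p = fderiv ℝ f p (1,0) from (hasDerivAt_slice_t f hf p).deriv,
      show pt g p = fderiv ℝ g p (1,0) from (hasDerivAt_slice_t g hg p).deriv]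

lemma px_add {f g : ℝ × ℝ → ℝ} (hf : ContDiff ℝ (⊤ : ℕ∞) f) (hg : ContDiff ℝ (⊤ : ℕ∞) g) (p : ℝ × ℝ) :
    px (fun q => f q + g q) p = px f p + px g p := by
  have h := (hasDerivAt_slice_x f hf p).add (hasDerivAt_slice_x g hg p)
  rw [px, (HasDerivAt.deriv (f := fun y => f (p.1, y) + g (p.1, y)) h), px_eq_fderiv f hf p, px_eq_fderiv g hg p]

lemma px_sub {f g : ℝ × ℝ → ℝ} (hf : ContDiff ℝ (⊤ : ℕ∞) f) (hg : ContDiff ℝ (⊤ : ℕ∞) g) (p : ℝ × ℝ) :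
    px (fun q => f q - g q) p = px f p - px g p := by
  have h := (hasDerivAt_slice_x f hf p).sub (hasDerivAt_slice_x g hg p)
  rw [px, (HasDerivAt.deriv (f := fun y => f (p.1, y) - g (p.1, y)) h), px_eq_fderiv f hf p, px_eq_fderiv g hg p]

/-- a symmetry P and an adjoint-symmetry Q of KdV yield the
local conservation law ∂_t(P·Q) + ∂_x(u·P·Q + Q·∂_x²P + P·∂_x²Q − ∂_xP·∂_xQ) = 0. -/
theorem kdv_conservation_law_from_symmetry_adjoint_symmetry
    (u P Q : ℝ × ℝ → ℝ)
    (hu : ContDiff ℝ (⊤ : ℕ∞) u) (hP : ContDiff ℝ (⊤ : ℕ∞) P) (hQ : ContDiff ℝ (⊤ : ℕ∞) Q)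
    (hkdv : ∀ p : ℝ × ℝ, pt u p + u p * px u p + px (px (px u)) p = 0)
    (hsymm : ∀ p : ℝ × ℝ, pt P p + px (fun q => u q * P q) p + px (px (px P)) p = 0)
    (hadj : ∀ p : ℝ × ℝ, pt Q p + u p * px Q p + px (px (px Q)) p = 0) :
    ∀ p : ℝ × ℝ,
      pt (fun q => P q * Q q) p
        + px (fun q => u q * P q * Q q + Q q * px (px P) q + P q * px (px Q) q
              - px P q * px Q q) p = 0 := by
  intro p
  have hs := hsymm p
  rw [px_mul hu hP p] at hs
  have ha := hadj p
  rw [pt_mul hP hQ p,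
      px_sub ((((hu.mul hP).mul hQ).add (hQ.mul (cpx (cpx hP)))).add (hP.mul (cpx (cpx hQ))))
        ((cpx hP).mul (cpx hQ)) p,
      px_add (((hu.mul hP).mul hQ).add (hQ.mul (cpx (cpx hP)))) (hP.mul (cpx (cpx hQ))) p,
      px_add ((hu.mul hP).mul hQ) (hQ.mul (cpx (cpx hP))) p,
      px_mul (hu.mul hP) hQ p, px_mul hu hP p,
      px_mul hQ (cpx (cpx hP)) p, px_mul hP (cpx (cpx hQ)) p,
      px_mul (cpx hP) (cpx hQ) p]
  linear_combination Q p * hs + P p * ha
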